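/- Let k be a non-negative integer and n a positive integer. Let p be a prime with p ≡ 3 (mod 4). Then for any integer j with j ≢ 0 (mod p), one has B₄( p^{2k+2} n + p^{2k+1} j + (p^{2k+2} − 1)/4 ) ≡ 0 (mod 4). (Since p ≡ 3 (mod 4), 4 divides p^{2k+2} − 1.) -/

import Mathlib

/-- Number of `l`-regular partitions of `n`: partitions none of whose parts is
divisible by `l`. -/
def numRegularPartitions (l n : ℕ) : ℕ :=
  (Finset.univ.filter (fun p : Nat.Partition n => ∀ x ∈ p.parts, ¬ l ∣ x)).card

/-- `B l n`: the number of `l`-regular bipartitions of `n`, i.e. ordered pairs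
`(λ, μ)` of `l`-regular partitions the sum of whose parts equals `n`. -/
def B (l n : ℕ) : ℕ :=
  ∑ ab ∈ Finset.HasAntidiagonal.antidiagonal n,
    numRegularPartitions l ab.1 * numRegularPartitions l ab.2

/-!
Modulo 2, the generating function `(q⁴;q⁴)_∞ / (q;q)_∞` of 4-regular partitions is `(q;q)_∞³`,
and so is `(q²;q²)_∞² / (q;q)_∞`, which by Gauss's identity equals `ψ(q) = ∑ q^(r(r+1)/2)`.
Hence `b₄(n)` is odd exactly when `n` is triangular. Pairing `(λ, μ)` with `(μ, λ)` shows
`B₄(t) ≡ 0 (mod 4)` whenever `t` is not a sum of two triangular numbers, i.e. whenever `8t + 2` is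
not a sum of two odd squares. For the `t` of the theorem, `8t + 2 = 2 p^(2k+1) m` with `p ∤ m`
and `p ≡ 3 (mod 4)`, which is not a sum of two squares at all.

Gauss's identity is proved modulo `X^(n+1)`, from the finite q-binomial theorem.
-/

open Finset PowerSeries

def tri (m : ℕ) : ℕ := m * (m + 1) / 2

@[simp] theorem tri_zero : tri 0 = 0 := rfl

theorem two_mul_tri (m : ℕ) : 2 * tri m = m * (m + 1) := by
  have := (Nat.even_mul_succ_self m).two_dvd
  unfold tri
  omega

theorem tri_succ (m : ℕ) : tri (m + 1) = tri m + (m + 1) := by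
  have h := two_mul_tri (m + 1)
  have h' := two_mul_tri m
  have : (m + 1) * (m + 1 + 1) = m * (m + 1) + 2 * (m + 1) := by ring
  omega

theorem self_le_tri (m : ℕ) : m ≤ tri m := by
  have := two_mul_tri m
  nlinarith

theorem tri_strictMono : StrictMono tri :=
  strictMono_nat_of_lt_succ fun m => by rw [tri_succ]; omega

theorem sum_range_add_one_eq_tri (n : ℕ) : ∑ k ∈ range n, (k + 1) = tri n := by
  induction n with
  | zero => rfl
  | succ n ih => rw [sum_range_succ, ih, tri_succ]

theorem tri_add_mul_sub (N s : ℕ) (hs : s ≤ N) :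
    tri (N + s) + N * (N - s) = tri N + N * N + tri s := by
  obtain ⟨d, rfl⟩ := Nat.exists_eq_add_of_le hs
  apply Nat.eq_of_mul_eq_mul_left two_pos
  simp only [mul_add, two_mul_tri, show s + d - s = d by omega]
  ring

theorem tri_sub_add_mul_add (N s : ℕ) (hs : s < N) :
    tri (N - 1 - s) + N * (N + 1 + s) = tri N + N * N + tri s := by
  obtain ⟨d, rfl⟩ := Nat.exists_eq_add_of_lt hs
  apply Nat.eq_of_mul_eq_mul_left two_pos
  simp only [mul_add, two_mul_tri, show s + d + 1 - 1 - s = d by omega]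
  ring

section QBinomial

variable (R : Type*) [CommRing R]

-- The q-Pochhammer symbols `(X;X)_a` and `(-X;X)_a`, and the Gaussian binomial coefficients.
noncomputable def qPoch (a : ℕ) : R⟦X⟧ := ∏ i ∈ range a, (1 - X ^ (i + 1))

noncomputable def qPochNeg (a : ℕ) : R⟦X⟧ := ∏ i ∈ range a, (1 + X ^ (i + 1))

noncomputable def qBinom : ℕ → ℕ → R⟦X⟧
  | _, 0 => 1
  | 0, _ + 1 => 0
  | n + 1, k + 1 => X ^ (n - k) * qBinom n k + qBinom n (k + 1)

variable {R}

theorem qPoch_succ (a : ℕ) : qPoch R (a + 1) = qPoch R a * (1 - X ^ (a + 1)) :=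
  prod_range_succ _ _

@[simp] theorem qBinom_zero_right (n : ℕ) : qBinom R n 0 = 1 := by cases n <;> rfl

theorem qBinom_succ_succ (n k : ℕ) :
    qBinom R (n + 1) (k + 1) = X ^ (n - k) * qBinom R n k + qBinom R n (k + 1) := rfl

theorem qBinom_eq_zero_of_lt {n k : ℕ} (h : n < k) : qBinom R n k = 0 := by
  induction n generalizing k with
  | zero => obtain ⟨k, rfl⟩ := Nat.exists_eq_succ_of_ne_zero h.ne'; rfl
  | succ n ih =>
    obtain ⟨k, rfl⟩ := Nat.exists_eq_succ_of_ne_zero (by omega : k ≠ 0)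
    rw [qBinom_succ_succ, ih (by omega), ih (by omega), mul_zero, add_zero]

@[simp] theorem qBinom_self (n : ℕ) : qBinom R n n = 1 := by
  induction n with
  | zero => rfl
  | succ n ih => rw [qBinom_succ_succ, ih, qBinom_eq_zero_of_lt (by omega), Nat.sub_self]; ring

theorem qBinom_mul_qPoch_mul_qPoch (k l : ℕ) :
    qBinom R (k + l) k * qPoch R k * qPoch R l = qPoch R (k + l) := by
  induction k generalizing l with
  | zero => simp [qPoch]
  | succ k ih =>
    induction l with
    | zero => simp [qPoch]
    | succ l ihl =>
      have h₁ := ih (l + 1)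
      rw [← add_assoc, qPoch_succ l] at h₁
      rw [add_right_comm, qPoch_succ k] at ihl
      rw [show k + 1 + (l + 1) = k + l + 1 + 1 by ring, qBinom_succ_succ,
        show k + l + 1 - k = l + 1 by omega, qPoch_succ k, qPoch_succ l, qPoch_succ (k + l + 1)]
      linear_combination (X ^ (l + 1) * (1 - X ^ (k + 1))) * h₁ + (1 - X ^ (l + 1)) * ihl

theorem prod_range_add_X_pow_eq_sum_qBinom (z : R⟦X⟧) (m : ℕ) :
    ∏ k ∈ range m, (z + X ^ (k + 1)) =
      ∑ r ∈ range (m + 1), X ^ tri r * qBinom R m r * z ^ (m - r) := by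
  induction m with
  | zero => simp
  | succ m ih =>
    have hz : (∑ r ∈ range (m + 1), X ^ tri r * qBinom R m r * z ^ (m - r)) * z =
        ∑ s ∈ range (m + 1), X ^ tri (s + 1) * qBinom R m (s + 1) * z ^ (m - s) +
          z ^ (m + 1) := by
      rw [sum_mul, sum_range_succ (fun s => X ^ tri (s + 1) * _ * _), qBinom_eq_zero_of_lt
        (Nat.lt_succ_self m), mul_zero, zero_mul, add_zero, sum_range_succ' _ m]
      simp only [tri_zero, qBinom_zero_right, Nat.sub_zero, pow_zero, mul_one, one_mul,
        ← pow_succ]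
      congr 1
      refine sum_congr rfl fun s hs => ?_
      rw [mul_assoc, ← pow_succ, show m - (s + 1) + 1 = m - s by simp at hs; omega]
    have hX : (∑ r ∈ range (m + 1), X ^ tri r * qBinom R m r * z ^ (m - r)) * X ^ (m + 1) =
        ∑ s ∈ range (m + 1), X ^ tri (s + 1) * (X ^ (m - s) * qBinom R m s) * z ^ (m - s) := by
      rw [sum_mul]
      refine sum_congr rfl fun s hs => ?_
      have : tri (s + 1) + (m - s) = tri s + (m + 1) := by rw [tri_succ]; simp at hs; omega
      rw [mul_right_comm, mul_right_comm (X ^ tri s), ← pow_add, ← mul_assoc, ← pow_add, this]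
    rw [prod_range_succ, ih, mul_add, hz, hX, sum_range_succ' _ (m + 1)]
    simp only [qBinom_succ_succ, qBinom_zero_right, tri_zero, Nat.sub_zero, Nat.add_sub_add_right,
      mul_add, add_mul, sum_add_distrib]
    ring

theorem prod_range_X_pow_add_X_pow (N : ℕ) :
    ∏ k ∈ range (2 * (N + 1)), ((X : R⟦X⟧) ^ (N + 1) + X ^ (k + 1)) =
      X ^ (tri (N + 1) + (N + 1) * (N + 1)) * (2 * (qPochNeg R N * qPochNeg R (N + 1))) := by
  set M := N + 1
  have hlow : ∏ k ∈ range M, ((X : R⟦X⟧) ^ M + X ^ (k + 1)) =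
      X ^ tri M * (2 * qPochNeg R N) := by
    have h : ∀ k ∈ range M,
        (X : R⟦X⟧) ^ M + X ^ (k + 1) = X ^ (k + 1) * (1 + X ^ (M - 1 - k)) := by
      intro k hk
      rw [mul_add, mul_one, ← pow_add, show k + 1 + (M - 1 - k) = M by simp at hk; omega,
        add_comm]
    rw [prod_congr rfl h, prod_mul_distrib, prod_pow_eq_pow_sum, sum_range_add_one_eq_tri,
      prod_range_reflect (fun j => 1 + (X : R⟦X⟧) ^ j), prod_range_succ', qPochNeg]
    ring
  have hhigh : ∏ k ∈ range M, ((X : R⟦X⟧) ^ M + X ^ (M + k + 1)) =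
      X ^ (M * M) * qPochNeg R M := by
    have h : ∀ k ∈ range M,
        (X : R⟦X⟧) ^ M + X ^ (M + k + 1) = X ^ M * (1 + X ^ (k + 1)) := by
      intro k _
      rw [mul_add, mul_one, ← pow_add, add_assoc]
    rw [prod_congr rfl h, prod_mul_distrib, prod_const, card_range, ← pow_mul, qPochNeg]
  rw [two_mul, prod_range_add, hlow, hhigh, pow_add]
  ring

-- Divide the q-binomial theorem at `z = X^(N+1)`, `m = 2(N+1)` by `X^(tri (N+1) + (N+1)²)`:
-- with `r = N - s` or `r = N + 1 + s`, the exponent `tri r + (N+1)(2N+2-r)` becomes `tri s`.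
theorem two_mul_qPochNeg_mul_qPochNeg (N : ℕ) :
    2 * (qPochNeg R N * qPochNeg R (N + 1)) =
      ∑ s ∈ range (N + 1), X ^ tri s * qBinom R (2 * (N + 1)) (N - s) +
        ∑ s ∈ range (N + 2), X ^ tri s * qBinom R (2 * (N + 1)) (N + 1 + s) := by
  apply X_pow_mul_injective (k := tri (N + 1) + (N + 1) * (N + 1))
  dsimp only
  rw [← prod_range_X_pow_add_X_pow, prod_range_add_X_pow_eq_sum_qBinom,
    show 2 * (N + 1) + 1 = (N + 1) + (N + 2) by ring, sum_range_add, ← sum_range_reflect,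
    mul_add (X ^ _ : R⟦X⟧), mul_sum, mul_sum]
  congr 1 <;> refine sum_congr rfl fun s hs => ?_ <;> simp only [mem_range] at hs
  · rw [← pow_mul, show 2 * (N + 1) - (N + 1 - 1 - s) = N + 1 + 1 + s by omega,
      mul_right_comm, ← pow_add, tri_sub_add_mul_add _ _ (by omega), pow_add, mul_assoc,
      show N + 1 - 1 - s = N - s by omega]
  · rw [← pow_mul, show 2 * (N + 1) - (N + 1 + s) = N + 1 - s by omega,
      mul_right_comm, ← pow_add, tri_add_mul_sub _ _ (by omega), pow_add, mul_assoc]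

end QBinomial

section Truncation

variable {R : Type*} [CommRing R]

noncomputable abbrev modXPow (K : ℕ) : R⟦X⟧ →+* R⟦X⟧ ⧸ Ideal.span {(X : R⟦X⟧) ^ K} :=
  Ideal.Quotient.mk _

theorem modXPow_eq_iff {K : ℕ} {f g : R⟦X⟧} :
    modXPow K f = modXPow K g ↔ ∀ m < K, coeff m f = coeff m g := by
  rw [Ideal.Quotient.eq, Ideal.mem_span_singleton, X_pow_dvd_iff]
  simp only [map_sub, sub_eq_zero]

theorem modXPow_X_pow {K k : ℕ} (h : K ≤ k) : modXPow K (X ^ k : R⟦X⟧) = 0 :=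
  Ideal.Quotient.eq_zero_iff_mem.2 (Ideal.mem_span_singleton.2 (pow_dvd_pow X h))

theorem modXPow_map {S : Type*} [CommRing S] (φ : R →+* S) {K : ℕ} {f g : R⟦X⟧}
    (h : modXPow K f = modXPow K g) : modXPow K (map φ f) = modXPow K (map φ g) := by
  rw [modXPow_eq_iff] at h ⊢
  intro m hm
  simp only [coeff_map, h m hm]

theorem modXPow_eq_of_two_mul [IsAddTorsionFree R] {K : ℕ} {f g : R⟦X⟧}
    (h : modXPow K (2 * f) = modXPow K (2 * g)) : modXPow K f = modXPow K g := by
  rw [modXPow_eq_iff] at h ⊢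
  intro m hm
  have := h m hm
  rwa [two_mul, two_mul, map_add, map_add, ← two_nsmul, ← two_nsmul,
    nsmul_right_inj two_ne_zero] at this

theorem modXPow_qPoch {n a : ℕ} (h : n ≤ a) :
    modXPow (n + 1) (qPoch R a) = modXPow (n + 1) (qPoch R n) := by
  induction a, h using Nat.le_induction with
  | base => rfl
  | succ a h ih =>
    rw [qPoch_succ, map_mul, ih, map_sub, modXPow_X_pow (by omega), map_one, sub_zero, mul_one]

theorem isUnit_qPoch (a : ℕ) : IsUnit (qPoch R a) := by
  simp [isUnit_iff_constantCoeff, qPoch]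

theorem modXPow_qBinom_mul {n k l a b : ℕ} (hk : n ≤ k) (hl : n ≤ l) (ha : n ≤ a) (hb : n ≤ b) :
    modXPow (n + 1) (qBinom R (k + l) k * (qPoch R a * qPoch R b)) =
      modXPow (n + 1) (qPoch R (k + l)) := by
  rw [← qBinom_mul_qPoch_mul_qPoch, mul_assoc, map_mul, map_mul, map_mul, map_mul,
    modXPow_qPoch ha, modXPow_qPoch hb, modXPow_qPoch hk, modXPow_qPoch hl]

end Truncation

section Gauss

variable {R : Type*} [CommRing R]

-- Partial sums of Ramanujan's `ψ(q) = ∑ q^(r(r+1)/2)`.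
variable (R) in
noncomputable def partialPsi (K : ℕ) : R⟦X⟧ := ∑ s ∈ range K, X ^ tri s

theorem modXPow_sum_X_pow_tri_mul {n K : ℕ} (hK : n < K) (c : ℕ → R⟦X⟧)
    {y : R⟦X⟧ ⧸ Ideal.span {(X : R⟦X⟧) ^ (n + 1)}} (hc : ∀ s ≤ n, modXPow (n + 1) (c s) = y) :
    modXPow (n + 1) (∑ s ∈ range K, X ^ tri s * c s) =
      modXPow (n + 1) (partialPsi R (n + 1)) * y := by
  obtain ⟨d, rfl⟩ := Nat.exists_eq_add_of_lt hK
  rw [show n + d + 1 = (n + 1) + d by ring, sum_range_add, partialPsi, map_add, map_sum, map_sum,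
    map_sum, sum_mul]
  have htail : ∀ s ∈ range d, modXPow (n + 1) (X ^ tri (n + 1 + s) * c (n + 1 + s)) = 0 := by
    intro s _
    rw [map_mul, modXPow_X_pow ((self_le_tri _).trans' (by omega)), zero_mul]
  rw [sum_eq_zero htail, add_zero]
  refine sum_congr rfl fun s hs => ?_
  rw [map_mul, hc s (by simp at hs; omega)]

-- Gauss's identity `(X²;X²)_∞² = (X;X)_∞ ψ(X)` modulo `X^(n+1)`. Only the terms with `s ≤ n`
-- of `two_mul_qPochNeg_mul_qPochNeg` survive, and for those the Gaussian binomial coefficient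
-- times the two q-Pochhammer symbols is `(X;X)_(2N+2)`. The factor `2` has to be cancelled,
-- so the identity is not proved modulo `2` directly.
theorem modXPow_gauss [IsAddTorsionFree R] {n N : ℕ} (hN : 2 * n ≤ N) :
    modXPow (n + 1) (qPochNeg R N * qPochNeg R (N + 1) * (qPoch R (N + 1) * qPoch R N)) =
      modXPow (n + 1) (qPoch R (2 * (N + 1)) * partialPsi R (n + 1)) := by
  apply modXPow_eq_of_two_mul
  have hlow : ∀ s ≤ n,
      modXPow (n + 1) (qBinom R (2 * (N + 1)) (N - s) * (qPoch R (N + 1) * qPoch R N)) =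
        modXPow (n + 1) (qPoch R (2 * (N + 1))) := by
    intro s hs
    rw [show 2 * (N + 1) = (N - s) + (N + 2 + s) by omega]
    exact modXPow_qBinom_mul (by omega) (by omega) (by omega) (by omega)
  have hhigh : ∀ s ≤ n,
      modXPow (n + 1) (qBinom R (2 * (N + 1)) (N + 1 + s) * (qPoch R (N + 1) * qPoch R N)) =
        modXPow (n + 1) (qPoch R (2 * (N + 1))) := by
    intro s hs
    rw [show 2 * (N + 1) = (N + 1 + s) + (N + 1 - s) by omega]
    exact modXPow_qBinom_mul (by omega) (by omega) (by omega) (by omega)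
  rw [← mul_assoc, two_mul_qPochNeg_mul_qPochNeg, add_mul, sum_mul, sum_mul]
  simp_rw [mul_assoc]
  rw [map_add, modXPow_sum_X_pow_tri_mul (by omega) _ hlow,
    modXPow_sum_X_pow_tri_mul (by omega) _ hhigh]
  simp only [map_mul, map_ofNat]
  ring

end Gauss

section RegularPartitions

open PowerSeries.WithPiTopology

-- `∑ b_l(n) X^n = (X^l;X^l)_∞ / (X;X)_∞`: the geometric series of the parts not divisible by `l`
-- cancel against their factors in `(X;X)_∞`, and the others are reindexed by `i + 1 = (c + 1) l`.
theorem hasProd_one_sub_X_pow_mul (R : Type*) [CommRing R] [TopologicalSpace R]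
    [IsTopologicalRing R] [T2Space R] {l : ℕ} (hl : 0 < l) :
    HasProd (fun i => (1 : R⟦X⟧) - X ^ ((i + 1) * l))
      (mk (fun n => (numRegularPartitions l n : R)) * ∏' i, (1 - X ^ (i + 1))) := by
  have hG : HasProd (fun i => if ¬ l ∣ i + 1 then ∑' j, (X : R⟦X⟧) ^ ((i + 1) * j) else 1)
      (mk fun n => (numRegularPartitions l n : R)) :=
    Nat.Partition.hasProd_powerSeriesMk_card_restricted R (¬ l ∣ ·)
  have hfactor : ∀ i, (if ¬ l ∣ i + 1 then ∑' j, (X : R⟦X⟧) ^ ((i + 1) * j) else 1) *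
      (1 - X ^ (i + 1)) = if l ∣ i + 1 then 1 - X ^ (i + 1) else 1 := by
    intro i
    by_cases hi : l ∣ i + 1
    · simp [hi]
    · simp only [hi, not_false_eq_true, if_true, if_false, pow_mul]
      exact tsum_pow_mul_one_sub_of_constantCoeff_eq_zero (by simp)
  have h := hG.mul (multipliable_one_sub_X_pow R).hasProd
  simp_rw [hfactor] at h
  have hpos (c : ℕ) : 1 ≤ (c + 1) * l :=
    Nat.le_mul_of_pos_left l (Nat.succ_pos c) |>.trans' hl
  have hg : Function.Injective fun c : ℕ => (c + 1) * l - 1 := by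
    intro a b hab
    have : (a + 1) * l = (b + 1) * l := by
      have := hpos a
      have := hpos b
      simp only at hab
      omega
    simpa using Nat.eq_of_mul_eq_mul_right hl this
  have hsupp : ∀ i ∉ Set.range fun c : ℕ => (c + 1) * l - 1,
      (if l ∣ i + 1 then (1 : R⟦X⟧) - X ^ (i + 1) else 1) = 1 := by
    intro i hi
    rw [if_neg]
    rintro ⟨c, hc⟩
    obtain ⟨c, rfl⟩ := Nat.exists_eq_succ_of_ne_zero (show c ≠ 0 by rintro rfl; simp at hc)
    exact hi ⟨c, by simp only; rw [mul_comm, ← hc]; rfl⟩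
  convert (hg.hasProd_iff hsupp).2 h using 1
  ext1 c
  simp [Nat.sub_add_cancel (hpos c)]

end RegularPartitions

section Parity

open PowerSeries.WithPiTopology Filter

instance {R : Type*} [CommRing R] (p : ℕ) [CharP R p] : CharP R⟦X⟧ p :=
  charP_of_injective_algebraMap C_injective p

theorem HasProd.eventually_modXPow_prod_range {R : Type*} [CommRing R] [TopologicalSpace R]
    [DiscreteTopology R] {f : ℕ → R⟦X⟧} {x : R⟦X⟧} (h : HasProd f x) (K : ℕ) :
    ∀ᶠ a in atTop, modXPow K (∏ i ∈ range a, f i) = modXPow K x := by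
  have hcoeff := (tendsto_iff_coeff_tendsto R _ _ _).1 h.tendsto_prod_nat
  simp_rw [nhds_discrete, tendsto_pure] at hcoeff
  simp_rw [modXPow_eq_iff]
  exact (eventually_all_finite (Set.finite_lt_nat K)).2 fun m _ => hcoeff m

theorem map_qPoch {R S : Type*} [CommRing R] [CommRing S] (φ : R →+* S) (a : ℕ) :
    map φ (qPoch R a) = qPoch S a := by
  simp [qPoch]

theorem map_partialPsi {R S : Type*} [CommRing R] [CommRing S] (φ : R →+* S) (K : ℕ) :
    map φ (partialPsi R K) = partialPsi S K := by
  simp [partialPsi]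

theorem map_qPochNeg_of_charTwo {R : Type*} [CommRing R] [CharP R 2] (a : ℕ) :
    map (Int.castRingHom R) (qPochNeg ℤ a) = qPoch R a := by
  simp [qPochNeg, qPoch, CharTwo.sub_eq_add]

theorem modXPow_qPoch_pow_four {R : Type*} [CommRing R] [CharP R 2] (n : ℕ) :
    modXPow (n + 1) (qPoch R n ^ 4) = modXPow (n + 1) (qPoch R n * partialPsi R (n + 1)) := by
  have h := modXPow_map (Int.castRingHom R) (modXPow_gauss (R := ℤ) (le_refl (2 * n)))
  simp only [map_mul, map_qPoch, map_qPochNeg_of_charTwo, map_partialPsi] at h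
  simp only [modXPow_qPoch (show n ≤ 2 * n by omega),
    modXPow_qPoch (show n ≤ 2 * n + 1 by omega),
    modXPow_qPoch (show n ≤ 2 * (2 * n + 1) by omega)] at h
  rw [map_pow, map_mul, ← h]
  ring

theorem genFun_numRegularPartitions_four_mul :
    mk (fun n => (numRegularPartitions 4 n : ZMod 2)) * ∏' i, (1 - X ^ (i + 1)) =
      (∏' i, (1 - X ^ (i + 1)) : (ZMod 2)⟦X⟧) ^ 4 := by
  refine (hasProd_one_sub_X_pow_mul (ZMod 2) four_pos).unique ?_
  convert ((multipliable_one_sub_X_pow (ZMod 2)).hasProd.pow 4) using 2 with i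
  -- `(1 - x)⁴ = 1 - x⁴` in characteristic `2`
  rw [show 4 = 2 ^ 2 by rfl, sub_pow_char_pow, one_pow, ← pow_mul]

theorem natCast_numRegularPartitions_four_eq_coeff (n : ℕ) :
    (numRegularPartitions 4 n : ZMod 2) = coeff n (partialPsi (ZMod 2) (n + 1)) := by
  obtain ⟨A, hA⟩ := eventually_atTop.1
    ((multipliable_one_sub_X_pow (ZMod 2)).hasProd.eventually_modXPow_prod_range (n + 1))
  have hE := (hA (max A n) le_sup_left).symm.trans (modXPow_qPoch le_sup_right)
  have h := congrArg (modXPow (n + 1)) genFun_numRegularPartitions_four_mul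
  rw [map_mul, map_pow, hE, ← map_pow, modXPow_qPoch_pow_four, map_mul, mul_comm] at h
  have hG := ((isUnit_qPoch n).map (modXPow (n + 1))).mul_left_cancel h
  simpa using modXPow_eq_iff.1 hG n n.lt_succ_self

theorem odd_numRegularPartitions_four_iff (n : ℕ) :
    Odd (numRegularPartitions 4 n) ↔ ∃ r, tri r = n := by
  rw [← ZMod.natCast_eq_one_iff_odd, natCast_numRegularPartitions_four_eq_coeff, partialPsi,
    map_sum]
  simp_rw [coeff_X_pow]
  constructor
  · intro h
    by_contra! hne
    rw [sum_eq_zero fun s _ => if_neg (hne s).symm] at h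
    exact zero_ne_one h
  · rintro ⟨r, rfl⟩
    rw [sum_eq_single_of_mem r (mem_range.2 (Nat.lt_succ_of_le (self_le_tri r))) fun s _ hs =>
      if_neg fun h => hs (tri_strictMono.injective h).symm, if_pos rfl]

end Parity

-- With `f = 2 g + e`, `e ∈ {0, 1}`: the terms `e a * e b` vanish and the cross terms
-- `2 g a * e b`, `2 e a * g b` pair up under `(a, b) ↦ (b, a)`.
theorem four_dvd_sum_antidiagonal_mul {f : ℕ → ℕ} {t : ℕ}
    (h : ∀ a b, a + b = t → ¬ (Odd (f a) ∧ Odd (f b))) :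
    4 ∣ ∑ ab ∈ antidiagonal t, f ab.1 * f ab.2 := by
  have hterm : ∀ ab ∈ antidiagonal t, f ab.1 * f ab.2 =
      4 * (f ab.1 / 2 * (f ab.2 / 2)) + 2 * (f ab.1 / 2 * (f ab.2 % 2)) +
        2 * (f ab.1 % 2 * (f ab.2 / 2)) := by
    rintro ⟨a, b⟩ hab
    have hodd : f a % 2 * (f b % 2) = 0 := by
      have := h a b (mem_antidiagonal.1 hab)
      rw [Nat.odd_iff, Nat.odd_iff] at this
      rcases Nat.mod_two_eq_zero_or_one (f a) with ha | ha <;> simp_all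
    calc f a * f b = (2 * (f a / 2) + f a % 2) * (2 * (f b / 2) + f b % 2) := by
          rw [Nat.div_add_mod, Nat.div_add_mod]
      _ = 4 * (f a / 2 * (f b / 2)) + 2 * (f a / 2 * (f b % 2)) + 2 * (f a % 2 * (f b / 2)) +
          f a % 2 * (f b % 2) := by ring
      _ = _ := by rw [hodd, add_zero]
  have hswap : ∑ ab ∈ antidiagonal t, f ab.1 % 2 * (f ab.2 / 2) =
      ∑ ab ∈ antidiagonal t, f ab.1 / 2 * (f ab.2 % 2) := by
    rw [← Nat.sum_antidiagonal_swap]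
    simp [mul_comm]
  rw [sum_congr rfl hterm, sum_add_distrib, sum_add_distrib, ← mul_sum, ← mul_sum, ← mul_sum,
    hswap]
  omega

-- `8 t + 2 = (2a + 1)² + (2b + 1)²` would be a sum of two squares divisible by an odd power of
-- a prime `p ≡ 3 (mod 4)`.
theorem tri_add_tri_ne {p k t : ℕ} {m : ℤ} (hp : p.Prime) (hp3 : p % 4 = 3) (hm : ¬ (p : ℤ) ∣ m)
    (ht : (4 * t + 1 : ℤ) = p ^ (2 * k + 1) * m) (a b : ℕ) : tri a + tri b ≠ t := by
  have hp0 : (0 : ℤ) < p ^ (2 * k + 1) := by have := hp.pos; positivity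
  lift m to ℕ using nonneg_of_mul_nonneg_right (by rw [← ht]; positivity) hp0
  rw [Int.natCast_dvd_natCast] at hm
  have ht : 4 * t + 1 = p ^ (2 * k + 1) * m := by exact_mod_cast ht
  rintro rfl
  have := Fact.mk hp
  have hsq : p ^ (2 * k + 1) * (2 * m) = (2 * a + 1) ^ 2 + (2 * b + 1) ^ 2 := by
    have := two_mul_tri a
    have := two_mul_tri b
    nlinarith
  have h2m : ¬ p ∣ 2 * m := fun hd => ((Nat.Prime.dvd_mul hp).1 hd).elim
    (fun h2 => by have := Nat.le_of_dvd two_pos h2; omega) hm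
  have hm0 : 2 * m ≠ 0 := by
    rintro h0
    rw [show m = 0 by omega, mul_zero] at ht
    omega
  have hp_mem : p ∈ (p ^ (2 * k + 1) * (2 * m)).primeFactors :=
    Nat.mem_primeFactors.2 ⟨hp, dvd_mul_of_dvd_left (dvd_pow_self p (by omega)) _,
      by simp [hm0, hp.ne_zero]⟩
  have heven := Nat.eq_sq_add_sq_iff.1 ⟨_, _, hsq⟩ p hp_mem hp3
  rw [padicValNat.mul (pow_ne_zero _ hp.ne_zero) hm0, padicValNat.prime_pow,
    padicValNat.eq_zero_of_not_dvd h2m, add_zero] at heven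
  exact Nat.not_even_two_mul_add_one k heven

theorem stmt10_general (k n : ℕ) (p : ℕ) (hp : p.Prime) (hp3 : p % 4 = 3)
    (j : ℤ) (hj : ¬ ((p : ℤ) ∣ j)) :
    ∀ t : ℕ,
      (4 * t : ℤ) =
        4 * (p : ℤ) ^ (2 * k + 2) * n + 4 * (p : ℤ) ^ (2 * k + 1) * j +
          ((p : ℤ) ^ (2 * k + 2) - 1) →
      B 4 t % 4 = 0 := by
  intro t ht
  have hfac : (4 * t + 1 : ℤ) = p ^ (2 * k + 1) * (4 * p * n + 4 * j + p) := by
    linear_combination ht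
  have hpm : ¬ (p : ℤ) ∣ 4 * p * n + 4 * j + p := by
    intro hd
    have h4j : (p : ℤ) ∣ 4 * j := by
      rw [show 4 * j = (4 * p * n + 4 * j + p) - p * (4 * n + 1) by ring]
      exact dvd_sub hd (dvd_mul_right _ _)
    rcases Int.Prime.dvd_mul' hp h4j with h4 | h4
    · obtain rfl : p = 3 := by
        have := Nat.le_of_dvd four_pos (Int.natCast_dvd_natCast.1 h4)
        omega
      norm_num at h4
    · exact hj h4
  refine Nat.mod_eq_zero_of_dvd (four_dvd_sum_antidiagonal_mul fun a b hab ⟨ha, hb⟩ => ?_)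
  obtain ⟨r, rfl⟩ := (odd_numRegularPartitions_four_iff a).1 ha
  obtain ⟨s, rfl⟩ := (odd_numRegularPartitions_four_iff b).1 hb
  exact tri_add_tri_ne hp hp3 hpm hfac r s hab

/-- Let `p` be a prime congruent to `3 (mod 4)` and `j` an integer not divisible by `p`.
If `t` is the natural number with
`4 t = 4 p^(2k+2) n + 4 p^(2k+1) j + (p^(2k+2) - 1)`, i.e.
`t = p^(2k+2) n + p^(2k+1) j + (p^(2k+2) - 1)/4`, then `B 4 t = 0 (mod 4)`. -/
theorem stmt10 (k n : ℕ) (hn : 0 < n) (p : ℕ) (hp : p.Prime) (hp3 : p % 4 = 3)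
    (j : ℤ) (hj : ¬ ((p : ℤ) ∣ j)) :
    ∀ t : ℕ,
      (4 * t : ℤ) =
        4 * (p : ℤ) ^ (2 * k + 2) * n + 4 * (p : ℤ) ^ (2 * k + 1) * j +
          ((p : ℤ) ^ (2 * k + 2) - 1) →
      B 4 t % 4 = 0 :=
  stmt10_general k n p hp hp3 j hj
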